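/- The full subcategory of positive cyclic operads is reflective in the category of cyclic operads: the functor G sending a cyclic operad P to the positive cyclic operad GP with the same colors, GP(c₀,…,c_n) = P(c₀,…,c_n) for n ≥ 0 and GP() = *, is left adjoint to the inclusion I : Cyc^↑ → Cyc. -/

import Mathlib

open CategoryTheory MonoidalCategory

universe w v u

/-- The profile `c̄ σ = c_{σ(0)}, …, c_{σ(n)}` obtained by permuting a profile (a list). -/
def permuteList {C : Type u} (c : List C) {n : ℕ} (h : c.length = n)
    (σ : Equiv.Perm (Fin n)) : List C :=
  List.ofFn fun k => c.get (Fin.cast h.symm (σ k))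

/-- The composite profile `c̄ ∘_i^j d̄ = c_0,…,c_{i-1}, d_{j+1},…,d_m, d_0,…,d_{j-1},
c_{i+1},…,c_n`. -/
def profComp {C : Type u} (c d : List C) (i j : ℕ) : List C :=
  c.take i ++ (d.drop (j + 1) ++ (d.take j ++ c.drop (i + 1)))

/-- The helper function `α_{i,m}` : identity on `[0,i-1]`, `x ↦ x - 1 + m` on `[i+1,n]`. -/
def alphaN (i m x : ℕ) : ℕ := if x < i then x else x + m - 1

/-- The helper function `β_{j,i}` : `x ↦ x + m - j + i` on `[0,j-1]`, `x ↦ x - j - 1 + i`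
on `[j+1,m]`. -/
def betaN (m j i x : ℕ) : ℕ := if x < j then x + m + i - j else x + i - j - 1

/-- The underlying data of a (colored) cyclic operad in a monoidal category `V`, *without*
identity elements: an involutive color set, objects `P(c_0,…,c_n)` of `V` indexed by
profiles, a right action of `Σ_n^+ = Aut([0,n])`, and composition operations `∘_i^j`
defined when `c_i = d_j^†`. -/
structure VCycDataNU (C : Type u) (V : Type v) [Category.{w} V] [MonoidalCategory V] where
  dag : C → C
  dag_invol : Function.Involutive dag
  P : List C → V
  act : ∀ {c : List C} {n : ℕ} (h : c.length = n) (σ : Equiv.Perm (Fin n)),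
    P c ⟶ P (permuteList c h σ)
  comp : ∀ {c d : List C} (i j : ℕ) (hi : i < c.length) (hj : j < d.length),
    c.get ⟨i, hi⟩ = dag (d.get ⟨j, hj⟩) → (P c ⊗ P d ⟶ P (profComp c d i j))

/-- The underlying data of a (colored) cyclic operad in `V`: the non-unital data together
with identity elements `id_c : 𝟙_V → P(c^†, c)`. -/
structure VCycData (C : Type u) (V : Type v) [Category.{w} V] [MonoidalCategory V] extends
    VCycDataNU C V where
  ident : ∀ c : C, (𝟙_ V ⟶ P [dag c, c])

variable {C : Type u} {V : Type v} [Category.{w} V] [MonoidalCategory V] [SymmetricCategory V]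

/-- Axioms (C.1), (C.2), (C.3) of a cyclic operad (together with functoriality of the
symmetric group actions): a *non-unital Markl cyclic operad*. -/
structure IsVMarkl (D : VCycDataNU C V) : Prop where
  act_one : ∀ {c : List C} {n : ℕ} (h : c.length = n) (hl : permuteList c h 1 = c),
    D.act h 1 = eqToHom (congrArg D.P hl.symm)
  act_mul : ∀ {c : List C} {n : ℕ} (h : c.length = n) (σ σ' : Equiv.Perm (Fin n))
    (h2 : (permuteList c h σ).length = n)
    (hl : permuteList (permuteList c h σ) h2 σ' = permuteList c h (σ * σ')),
    D.act h σ ≫ D.act h2 σ' = D.act h (σ * σ') ≫ eqToHom (congrArg D.P hl.symm)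
  /- (C.1): `(τ^{m-j+i})^* (x ∘_i^j y) = y ∘_j^i x`. -/
  swap : ∀ {c d : List C} (i j : ℕ) (hi : i < c.length) (hj : j < d.length)
    (hcd : c.get ⟨i, hi⟩ = D.dag (d.get ⟨j, hj⟩))
    (hdc : d.get ⟨j, hj⟩ = D.dag (c.get ⟨i, hi⟩))
    (hlen : (profComp c d i j).length = c.length + d.length - 2)
    (hl : permuteList (profComp c d i j) hlen
        ((finRotate (c.length + d.length - 2)) ^ (d.length - 1 - j + i)) = profComp d c j i),
    D.comp i j hi hj hcd ≫
        D.act hlen ((finRotate (c.length + d.length - 2)) ^ (d.length - 1 - j + i)) ≫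
        eqToHom (congrArg D.P hl)
      = (β_ (D.P c) (D.P d)).hom ≫ D.comp j i hj hi hdc
  /- (C.2): `(x ∘_i^j y) ∘_{β_{j,i}(k)}^{l} z = x ∘_i^{α_{k,p}(j)} (y ∘_k^l z)` for `k ≠ j`,
  whenever the indicated compositions are defined. -/
  assoc : ∀ {c d e : List C} (i j k l : ℕ) (hi : i < c.length) (hj : j < d.length)
    (hk : k < d.length) (hl : l < e.length) (_ : k ≠ j)
    (h1 : c.get ⟨i, hi⟩ = D.dag (d.get ⟨j, hj⟩))
    (h2 : d.get ⟨k, hk⟩ = D.dag (e.get ⟨l, hl⟩))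
    (hb : betaN (d.length - 1) j i k < (profComp c d i j).length)
    (hcol1 : (profComp c d i j).get ⟨betaN (d.length - 1) j i k, hb⟩ = D.dag (e.get ⟨l, hl⟩))
    (ha : alphaN k (e.length - 1) j < (profComp d e k l).length)
    (hcol2 : c.get ⟨i, hi⟩ = D.dag ((profComp d e k l).get ⟨alphaN k (e.length - 1) j, ha⟩))
    (hlist : profComp c (profComp d e k l) i (alphaN k (e.length - 1) j)
      = profComp (profComp c d i j) e (betaN (d.length - 1) j i k) l),
    (D.comp i j hi hj h1 ▷ D.P e) ≫ D.comp (betaN (d.length - 1) j i k) l hb hl hcol1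
      = (α_ (D.P c) (D.P d) (D.P e)).hom ≫ (D.P c ◁ D.comp k l hk hl h2) ≫
          D.comp i (alphaN k (e.length - 1) j) hi ha hcol2 ≫ eqToHom (congrArg D.P hlist)
  /- (C.3): `(σ₁^* x) ∘_i^j (σ₂^* y) = σ^* (x ∘_{σ₁(i)}^{σ₂(j)} y)` where `σ` is determined
  by `σ ∘ (α_{i,m} ⊔ β_{j,i}) = (α_{σ₁(i),m} ⊔ β_{σ₂(j),σ₁(i)}) ∘ (σ₁ ⊔ σ₂)`. -/
  equiv : ∀ {c d : List C} {nc nd : ℕ} (h1 : c.length = nc) (h2 : d.length = nd)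
    (σ₁ : Equiv.Perm (Fin nc)) (σ₂ : Equiv.Perm (Fin nd)) (i : Fin nc) (j : Fin nd)
    (σ : Equiv.Perm (Fin (nc + nd - 2)))
    (_ : ∀ (x : Fin nc), x ≠ i → ∀ (hax : alphaN i.val (nd - 1) x.val < nc + nd - 2),
      (σ ⟨alphaN i.val (nd - 1) x.val, hax⟩).val = alphaN (σ₁ i).val (nd - 1) (σ₁ x).val)
    (_ : ∀ (x : Fin nd), x ≠ j → ∀ (hbx : betaN (nd - 1) j.val i.val x.val < nc + nd - 2),
      (σ ⟨betaN (nd - 1) j.val i.val x.val, hbx⟩).val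
        = betaN (nd - 1) (σ₂ j).val (σ₁ i).val (σ₂ x).val)
    (hip : i.val < (permuteList c h1 σ₁).length) (hjp : j.val < (permuteList d h2 σ₂).length)
    (hcolp : (permuteList c h1 σ₁).get ⟨i.val, hip⟩
      = D.dag ((permuteList d h2 σ₂).get ⟨j.val, hjp⟩))
    (hi0 : (σ₁ i).val < c.length) (hj0 : (σ₂ j).val < d.length)
    (hcol0 : c.get ⟨(σ₁ i).val, hi0⟩ = D.dag (d.get ⟨(σ₂ j).val, hj0⟩))
    (hlen : (profComp c d (σ₁ i).val (σ₂ j).val).length = nc + nd - 2)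
    (hlist : permuteList (profComp c d (σ₁ i).val (σ₂ j).val) hlen σ
      = profComp (permuteList c h1 σ₁) (permuteList d h2 σ₂) i.val j.val),
    (D.act h1 σ₁ ⊗ₘ D.act h2 σ₂) ≫ D.comp i.val j.val hip hjp hcolp
      = D.comp (σ₁ i).val (σ₂ j).val hi0 hj0 hcol0 ≫ D.act hlen σ ≫
          eqToHom (congrArg D.P hlist)

/-- The axioms (C.1)–(C.4) of a (colored) cyclic operad in `V`. -/
structure IsVCyc (D : VCycData C V) : Prop where
  markl : IsVMarkl D.toVCycDataNU
  /- (C.4), first half: `x ∘_i^1 id_c = x`. -/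
  unit : ∀ {c : List C} (i : ℕ) (hi : i < c.length) (cc : C)
    (h2 : 1 < ([D.dag cc, cc] : List C).length)
    (hcol : c.get ⟨i, hi⟩ = D.dag (([D.dag cc, cc] : List C).get ⟨1, h2⟩))
    (hlist : c = profComp c [D.dag cc, cc] i 1),
    (ρ_ (D.P c)).inv ≫ (D.P c ◁ D.ident cc) ≫ D.comp i 1 hi h2 hcol
      = eqToHom (congrArg D.P hlist)
  /- (C.4), second half: `τ^* id_c = id_{c^†}`. -/
  tau_ident : ∀ (cc : C) (h : ([D.dag cc, cc] : List C).length = 2)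
    (hl : permuteList [D.dag cc, cc] h (finRotate 2) = [D.dag (D.dag cc), D.dag cc]),
    D.ident cc ≫ D.act h (finRotate 2) = D.ident (D.dag cc) ≫ eqToHom (congrArg D.P hl.symm)

section Positive

open Limits

variable {V : Type v} [Category.{w} V] [MonoidalCategory V] [SymmetricCategory V]
  [HasTerminal V]

/-- The underlying collection of the positive reflection `GP`: same operation objects in
nonempty profiles, and the terminal object in the empty profile. -/
noncomputable def GP {C : Type u} (D : VCycData C V) : List C → V := fun l =>
  if l.length = 0 then ⊤_ V else D.P l

/-- The positive reflection `G P` of a cyclic operad `P`: same colors,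
`GP(c₀,…,c_n) = P(c₀,…,c_n)` for `n ≥ 0`, and `GP() = *` terminal; all data except the
compositions into the empty profile (which are uniquely determined by terminality) are
induced from `P`. -/
noncomputable def GData {C : Type u} (D : VCycData C V) : VCycData C V where
  dag := D.dag
  dag_invol := D.dag_invol
  P := GP D
  act := fun {c n} h σ => by
    by_cases hc : c.length = 0
    · exact terminal.from _ ≫ eqToHom (if_pos (by simp [permuteList]; omega)).symm
    · exact eqToHom (if_neg hc) ≫ D.act h σ ≫
        eqToHom (if_neg (by simp [permuteList]; omega)).symm
  comp := fun {c d} i j hi hj hcol => by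
    by_cases hres : (profComp c d i j).length = 0
    · exact terminal.from _ ≫ eqToHom (if_pos hres).symm
    · exact (eqToHom (if_neg (by omega)) ⊗ₘ eqToHom (if_neg (by omega))) ≫
        D.comp i j hi hj hcol ≫ eqToHom (if_neg hres).symm
  ident := fun cc => D.ident cc ≫
    eqToHom (show D.P [D.dag cc, cc] = GP D [D.dag cc, cc] from (if_neg (by simp)).symm)

/-- A cyclic operad is *positive* if its value on the empty profile is terminal. -/
def IsPositive {C : Type u} (D : VCycData C V) : Prop :=
  Nonempty (IsTerminal (D.P ([] : List C)))

end Positive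

/-- A morphism of (the underlying data of) cyclic operads in `V`: an involutive map of
colors together with maps of the operation objects, compatible with the symmetric group
actions, identities, and compositions. -/
structure VCycHom {C C' : Type u} {V : Type v} [Category.{w} V] [MonoidalCategory V]
    (D : VCycData C V) (E : VCycData C' V) where
  cf : C → C'
  cf_dag : ∀ c, cf (D.dag c) = E.dag (cf c)
  f : ∀ l : List C, D.P l ⟶ E.P (l.map cf)
  compat_act : ∀ (l : List C) (n : ℕ) (h : l.length = n) (h' : (l.map cf).length = n)
    (σ : Equiv.Perm (Fin n))
    (hl : permuteList (l.map cf) h' σ = (permuteList l h σ).map cf),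
    D.act h σ ≫ f (permuteList l h σ)
      = f l ≫ E.act h' σ ≫ eqToHom (congrArg E.P hl)
  compat_ident : ∀ (c : C) (hl : [E.dag (cf c), cf c] = ([D.dag c, c] : List C).map cf),
    D.ident c ≫ f [D.dag c, c] = E.ident (cf c) ≫ eqToHom (congrArg E.P hl)
  compat_comp : ∀ {c d : List C} (i j : ℕ) (hi : i < c.length) (hj : j < d.length)
    (hcol : c.get ⟨i, hi⟩ = D.dag (d.get ⟨j, hj⟩))
    (hi' : i < (c.map cf).length) (hj' : j < (d.map cf).length)
    (hcol' : (c.map cf).get ⟨i, hi'⟩ = E.dag ((d.map cf).get ⟨j, hj'⟩))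
    (hl : profComp (c.map cf) (d.map cf) i j = (profComp c d i j).map cf),
    D.comp i j hi hj hcol ≫ f (profComp c d i j)
      = (f c ⊗ₘ f d) ≫ E.comp i j hi' hj' hcol' ≫ eqToHom (congrArg E.P hl)

/-- `g ∘ η = k` for morphisms of cyclic operads, expressed componentwise. -/
def CompEq {C C' C'' : Type u} {V : Type v} [Category.{w} V] [MonoidalCategory V]
    {A : VCycData C V} {B : VCycData C' V} {Z : VCycData C'' V}
    (g : VCycHom B Z) (η : VCycHom A B) (k : VCycHom A Z) : Prop :=
  (∀ x, g.cf (η.cf x) = k.cf x) ∧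
  ∀ (l : List C) (hl : (l.map η.cf).map g.cf = l.map k.cf),
    η.f l ≫ g.f (l.map η.cf) ≫ eqToHom (congrArg Z.P hl) = k.f l


/-!
`GP` agrees with `P` on nonempty profiles and is terminal on the empty one. Compositions only
take operations in nonempty profiles and actions preserve profile length, so every structure
map of `GP` with nonempty target is the corresponding map of `P`, transported along
`GP(c̄) = P(c̄)`, while all maps into `GP()` coincide. Each axiom of `GP` is therefore
either an axiom of `P` or an equation between maps into a terminal object. For the same
reason a morphism `GP → Q` into a positive `Q` extending `k : P → Q` is forced: it is `k` on
nonempty profiles and the unique map into `Q()` on the empty one.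
-/

open Limits

section Profiles

variable {C C' : Type u}

lemma permuteList_length (c : List C) {n : ℕ} (h : c.length = n) (σ : Equiv.Perm (Fin n)) :
    (permuteList c h σ).length = n := by
  simp [permuteList]

lemma profComp_length {c d : List C} {i j : ℕ} (hi : i < c.length) (hj : j < d.length) :
    (profComp c d i j).length = c.length + d.length - 2 := by
  simp [profComp]
  omega

lemma map_eq_nil_of_length_eq_zero (φ : C → C') {l : List C} (h : l.length = 0) :
    l.map φ = [] :=
  List.map_eq_nil_iff.mpr (List.length_eq_zero_iff.mp h)

end Profiles

section EqToHom

variable {V : Type v} [Category.{w} V]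

lemma CategoryTheory.Limits.IsTerminal.hom_ext_of_eq {X Y T : V} (t : IsTerminal T)
    (h : Y = T) (f g : X ⟶ Y) : f = g := by
  subst h
  exact t.hom_ext f g

variable [MonoidalCategory V]

lemma eqToHom_tensorHom_eqToHom {X X' Y Y' : V} (h : X = X') (h' : Y = Y') :
    (eqToHom h ⊗ₘ eqToHom h') = eqToHom (by rw [h, h']) := by
  subst h h'
  simp

lemma whiskerLeft_eq_eqToHom_conj {W W' X Y : V} (h : W = W') (f : X ⟶ Y) :
    W ◁ f = eqToHom (by rw [h]) ≫ W' ◁ f ≫ eqToHom (by rw [h]) := by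
  subst h
  simp

lemma whiskerRight_eq_eqToHom_conj {W W' X Y : V} (h : W = W') (f : X ⟶ Y) :
    f ▷ W = eqToHom (by rw [h]) ≫ f ▷ W' ≫ eqToHom (by rw [h]) := by
  subst h
  simp

lemma associator_hom_eq_eqToHom_conj {X X' Y Y' Z Z' : V} (hx : X = X') (hy : Y = Y')
    (hz : Z = Z') :
    (α_ X Y Z).hom = eqToHom (by rw [hx, hy, hz]) ≫ (α_ X' Y' Z').hom ≫
      eqToHom (by rw [hx, hy, hz]) := by
  subst hx hy hz
  simp

lemma rightUnitor_inv_eq_eqToHom_conj {X X' : V} (h : X = X') :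
    (ρ_ X).inv = eqToHom h ≫ (ρ_ X').inv ≫ eqToHom (by rw [h]) := by
  subst h
  simp

lemma braiding_hom_eq_eqToHom_conj [BraidedCategory V] {X X' Y Y' : V} (h : X = X')
    (h' : Y = Y') :
    (β_ X Y).hom =
      (eqToHom h ⊗ₘ eqToHom h') ≫ (β_ X' Y').hom ≫ eqToHom (by rw [h, h']) := by
  subst h h'
  simp

end EqToHom

section Transport

variable {C C' : Type u} {V : Type v} [Category.{w} V] [MonoidalCategory V]

lemma VCycDataNU.act_congr (D : VCycDataNU C V) {c c' : List C} (hcc : c = c') {n : ℕ}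
    (h : c.length = n) (h' : c'.length = n) (σ : Equiv.Perm (Fin n)) :
    D.act h' σ = eqToHom (congrArg D.P hcc.symm) ≫ D.act h σ ≫
      eqToHom (show D.P (permuteList c h σ) = D.P (permuteList c' h' σ) by subst hcc; rfl) := by
  subst hcc
  simp

lemma VCycDataNU.comp_congr (D : VCycDataNU C V) {c c' d d' : List C} (hc : c = c')
    (hd : d = d') (i j : ℕ) (hi : i < c.length) (hj : j < d.length)
    (hcol : c.get ⟨i, hi⟩ = D.dag (d.get ⟨j, hj⟩))
    (hi' : i < c'.length) (hj' : j < d'.length)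
    (hcol' : c'.get ⟨i, hi'⟩ = D.dag (d'.get ⟨j, hj'⟩)) :
    D.comp i j hi' hj' hcol' =
      (eqToHom (congrArg D.P hc.symm) ⊗ₘ eqToHom (congrArg D.P hd.symm)) ≫
        D.comp i j hi hj hcol ≫
        eqToHom (show D.P (profComp c d i j) = D.P (profComp c' d' i j) by subst hc hd; rfl) := by
  subst hc hd
  simp

lemma VCycHom.f_congr {A : VCycData C V} {B : VCycData C' V} (φ : VCycHom A B)
    {l l' : List C} (h : l = l') :
    φ.f l' = eqToHom (congrArg A.P h.symm) ≫ φ.f l ≫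
      eqToHom (show B.P (l.map φ.cf) = B.P (l'.map φ.cf) by subst h; rfl) := by
  subst h
  simp

lemma VCycHom.ext {A : VCycData C V} {B : VCycData C' V} (g g' : VCycHom A B)
    (hcf : g.cf = g'.cf)
    (hf : ∀ l : List C, g.f l ≫ eqToHom (by rw [hcf]) = g'.f l) : g = g' := by
  obtain ⟨cf, _, f, _, _, _⟩ := g
  obtain ⟨cf', _, f', _, _, _⟩ := g'
  dsimp only at hcf
  subst hcf
  obtain rfl : f = f' := funext fun l => by simpa using hf l
  rfl

lemma hom_ext_of_isTerminal_P_nil {Q : VCycData C' V} (hQ : IsTerminal (Q.P ([] : List C')))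
    (φ : C → C') {l : List C} (h : l.length = 0) {X : V} (f g : X ⟶ Q.P (l.map φ)) : f = g :=
  hQ.hom_ext_of_eq (congrArg Q.P (map_eq_nil_of_length_eq_zero φ h)) f g

end Transport

section Reflection

variable {C : Type u} {V : Type v} [Category.{w} V] [MonoidalCategory V] [HasTerminal V]

lemma GData_P_of_length_ne_zero (D : VCycData C V) {l : List C} (h : l.length ≠ 0) :
    (GData D).P l = D.P l :=
  if_neg h

lemma GData_P_of_length_eq_zero (D : VCycData C V) {l : List C} (h : l.length = 0) :
    (GData D).P l = ⊤_ V :=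
  if_pos h

lemma GData_hom_ext (D : VCycData C V) {X : V} {l : List C} (h : l.length = 0)
    (f g : X ⟶ (GData D).P l) : f = g :=
  IsTerminal.hom_ext_of_eq terminalIsTerminal (GData_P_of_length_eq_zero D h) f g

lemma GData_act (D : VCycData C V) {c : List C} {n : ℕ} (h : c.length = n)
    (σ : Equiv.Perm (Fin n)) (hc : c.length ≠ 0) :
    (GData D).act h σ = eqToHom (GData_P_of_length_ne_zero D hc) ≫ D.act h σ ≫
      eqToHom (GData_P_of_length_ne_zero D (by rw [permuteList_length c h σ]; omega)).symm :=
  dif_neg hc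

lemma GData_comp (D : VCycData C V) {c d : List C} (i j : ℕ) (hi : i < c.length)
    (hj : j < d.length) (hcol : c.get ⟨i, hi⟩ = (GData D).dag (d.get ⟨j, hj⟩))
    (hres : (profComp c d i j).length ≠ 0) :
    (GData D).comp i j hi hj hcol =
      (eqToHom (GData_P_of_length_ne_zero D (by omega)) ⊗ₘ
        eqToHom (GData_P_of_length_ne_zero D (by omega))) ≫
        D.comp i j hi hj hcol ≫ eqToHom (GData_P_of_length_ne_zero D hres).symm :=
  dif_neg hres

lemma GData_ident (D : VCycData C V) (cc : C) :
    (GData D).ident cc =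
      D.ident cc ≫ eqToHom (show D.P [D.dag cc, cc] = (GData D).P [(GData D).dag cc, cc] from
        (GData_P_of_length_ne_zero D (by simp)).symm) :=
  rfl

lemma GData_ident_comp_eqToHom (D : VCycData C V) (cc : C) :
    (GData D).ident cc ≫ eqToHom (GData_P_of_length_ne_zero D (by simp)) = D.ident cc := by
  rw [GData_ident, Category.assoc, eqToHom_trans]
  exact Category.comp_id _

theorem isVMarkl_GData [SymmetricCategory V] {D : VCycData C V}
    (hD : IsVMarkl D.toVCycDataNU) : IsVMarkl (GData D).toVCycDataNU where
  act_one := by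
    intro c n h hl
    by_cases hc : c.length = 0
    · exact GData_hom_ext D (by rw [permuteList_length]; omega) _ _
    · rw [GData_act D h 1 hc, hD.act_one h hl]
      simp
  act_mul := by
    intro c n h σ σ' h2 hl
    by_cases hc : c.length = 0
    · exact GData_hom_ext D (by rw [permuteList_length]; omega) _ _
    · have hσc : (permuteList c h σ).length ≠ 0 := by rw [permuteList_length]; omega
      have hσσ'c : (permuteList (permuteList c h σ) h2 σ').length ≠ 0 := by
        rw [permuteList_length]; omega
      rw [GData_act D h σ hc, GData_act D h2 σ' hσc, GData_act D h (σ * σ') hc]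
      have E := congrArg
        (fun m => eqToHom (GData_P_of_length_ne_zero D hc) ≫ m ≫
          eqToHom (GData_P_of_length_ne_zero D hσσ'c).symm)
        (hD.act_mul h σ σ' h2 hl)
      simp only [Category.assoc, eqToHom_trans, eqToHom_trans_assoc, eqToHom_refl,
        Category.id_comp] at E ⊢
      exact E
  swap := by
    intro c d i j hi hj hcd hdc hlen hl
    have hdc_len := profComp_length hj hi
    have hcd_len := profComp_length hi hj
    by_cases hres : (profComp c d i j).length = 0
    · exact GData_hom_ext D (by omega) _ _
    · have hc : c.length ≠ 0 := by omega
      have hd : d.length ≠ 0 := by omega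
      have hres' : (profComp d c j i).length ≠ 0 := by omega
      rw [GData_comp D i j hi hj hcd hres, GData_act D hlen _ hres,
        GData_comp D j i hj hi hdc hres',
        braiding_hom_eq_eqToHom_conj (GData_P_of_length_ne_zero D hc)
          (GData_P_of_length_ne_zero D hd)]
      have E := congrArg
        (fun m => (eqToHom (GData_P_of_length_ne_zero D hc) ⊗ₘ
          eqToHom (GData_P_of_length_ne_zero D hd)) ≫ m ≫
            eqToHom (GData_P_of_length_ne_zero D hres').symm)
        (hD.swap i j hi hj hcd hdc hlen hl)
      simp only [Category.assoc, eqToHom_trans, eqToHom_trans_assoc, eqToHom_refl,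
        Category.id_comp, eqToHom_tensorHom_eqToHom] at E ⊢
      exact E
  assoc := by
    intro c d e i j k l hi hj hk hl hkj h1 h2 hb hcol1 ha hcol2 hlist
    by_cases hres : (profComp (profComp c d i j) e (betaN (d.length - 1) j i k) l).length = 0
    · exact GData_hom_ext D hres _ _
    · have hcd : (profComp c d i j).length ≠ 0 := by omega
      have hde : (profComp d e k l).length ≠ 0 := by omega
      have hc : c.length ≠ 0 := by omega
      have hd : d.length ≠ 0 := by omega
      have he : e.length ≠ 0 := by omega
      have hres' :
          (profComp c (profComp d e k l) i (alphaN k (e.length - 1) j)).length ≠ 0 := by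
        rwa [hlist]
      rw [GData_comp D i j hi hj h1 hcd,
        GData_comp D (betaN (d.length - 1) j i k) l hb hl hcol1 hres,
        GData_comp D k l hk hl h2 hde,
        GData_comp D i (alphaN k (e.length - 1) j) hi ha hcol2 hres',
        associator_hom_eq_eqToHom_conj (GData_P_of_length_ne_zero D hc)
          (GData_P_of_length_ne_zero D hd) (GData_P_of_length_ne_zero D he)]
      simp only [comp_whiskerRight, MonoidalCategory.whiskerLeft_comp,
        eqToHom_tensorHom_eqToHom, eqToHom_whiskerRight, whiskerLeft_eqToHom, Category.assoc]
      rw [whiskerRight_eq_eqToHom_conj (GData_P_of_length_ne_zero D he) (D.comp i j hi hj h1),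
        whiskerLeft_eq_eqToHom_conj (GData_P_of_length_ne_zero D hc) (D.comp k l hk hl h2)]
      have E := congrArg
        (fun m => eqToHom (show ((GData D).P c ⊗ (GData D).P d) ⊗ (GData D).P e =
            (D.P c ⊗ D.P d) ⊗ D.P e by
              rw [GData_P_of_length_ne_zero D hc, GData_P_of_length_ne_zero D hd,
                GData_P_of_length_ne_zero D he]) ≫
          m ≫ eqToHom (GData_P_of_length_ne_zero D hres).symm)
        (hD.assoc i j k l hi hj hk hl hkj h1 h2 hb hcol1 ha hcol2 hlist)
      simp only [Category.assoc, eqToHom_trans, eqToHom_trans_assoc, eqToHom_refl,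
        Category.id_comp] at E ⊢
      exact E
  equiv := by
    intro c d nc nd h1 h2 σ₁ σ₂ i j σ hσ1 hσ2 hip hjp hcolp hi0 hj0 hcol0 hlen hlist
    have hres_len := profComp_length hip hjp
    have hres0_len := profComp_length hi0 hj0
    rw [permuteList_length, permuteList_length] at hres_len
    by_cases hres :
        (profComp (permuteList c h1 σ₁) (permuteList d h2 σ₂) i.val j.val).length = 0
    · exact GData_hom_ext D hres _ _
    · have hc : c.length ≠ 0 := by omega
      have hd : d.length ≠ 0 := by omega
      have hres0 : (profComp c d (σ₁ i).val (σ₂ j).val).length ≠ 0 := by omega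
      rw [GData_act D h1 σ₁ hc, GData_act D h2 σ₂ hd,
        GData_comp D i.val j.val hip hjp hcolp hres,
        GData_comp D (σ₁ i).val (σ₂ j).val hi0 hj0 hcol0 hres0,
        GData_act D hlen σ hres0]
      have E := congrArg
        (fun m => (eqToHom (GData_P_of_length_ne_zero D hc) ⊗ₘ
          eqToHom (GData_P_of_length_ne_zero D hd)) ≫
            m ≫ eqToHom (GData_P_of_length_ne_zero D hres).symm)
        (hD.equiv h1 h2 σ₁ σ₂ i j σ hσ1 hσ2 hip hjp hcolp hi0 hj0 hcol0 hlen hlist)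
      simp only [Category.assoc, eqToHom_trans, eqToHom_trans_assoc, eqToHom_refl,
        Category.id_comp, eqToHom_tensorHom_eqToHom,
        ← tensorHom_comp_tensorHom] at E ⊢
      exact E

theorem isVCyc_GData [SymmetricCategory V] {D : VCycData C V} (hD : IsVCyc D) :
    IsVCyc (GData D) where
  markl := isVMarkl_GData hD.markl
  unit := by
    intro c i hi cc h2 hcol hlist
    have hc : c.length ≠ 0 := by omega
    have hres : (profComp c [(GData D).dag cc, cc] i 1).length ≠ 0 := by
      rw [profComp_length hi h2]
      simp only [List.length_cons, List.length_nil]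
      omega
    rw [GData_comp D i 1 hi h2 hcol hres, GData_ident,
      rightUnitor_inv_eq_eqToHom_conj (GData_P_of_length_ne_zero D hc),
      whiskerLeft_eq_eqToHom_conj (GData_P_of_length_ne_zero D hc)]
    have E := congrArg
      (fun m => eqToHom (GData_P_of_length_ne_zero D hc) ≫ m ≫
        eqToHom (GData_P_of_length_ne_zero D (l := profComp c [D.dag cc, cc] i 1) hres).symm)
      (hD.unit i hi cc h2 hcol hlist)
    simp only [Category.assoc, eqToHom_trans, eqToHom_trans_assoc, eqToHom_refl,
      Category.id_comp, eqToHom_tensorHom_eqToHom, MonoidalCategory.whiskerLeft_comp,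
      whiskerLeft_eqToHom] at E ⊢
    -- The remaining `eqToHom` relates `D.P [D.dag cc, cc]` to `D.P [(GData D).dag cc, cc]`,
    -- which agree only after unfolding `GData`.
    erw [eqToHom_refl, Category.id_comp]
    exact E
  tau_ident := by
    intro cc h hl
    rw [GData_act D h (finRotate 2) (by simp), ← Category.assoc, GData_ident_comp_eqToHom,
      GData_ident]
    have E := congrArg
      (· ≫ eqToHom (GData_P_of_length_ne_zero D (by rw [permuteList_length]; omega :
        (permuteList [D.dag cc, cc] h (finRotate 2)).length ≠ 0)).symm)
      (hD.tau_ident cc h hl)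
    simp only [Category.assoc, eqToHom_trans] at E ⊢
    exact E

lemma isPositive_GData (D : VCycData C V) : IsPositive (GData D) :=
  ⟨terminalIsTerminal.ofIso (eqToIso (GData_P_of_length_eq_zero D rfl)).symm⟩

noncomputable def toGData (D : VCycData C V) : VCycHom D (GData D) where
  cf := id
  cf_dag _ := rfl
  f l :=
    if h : l.length = 0 then
      terminal.from (D.P l) ≫ eqToHom (GData_P_of_length_eq_zero D (by simpa using h)).symm
    else
      eqToHom (show D.P l = (GData D).P (l.map id) by
        rw [List.map_id, GData_P_of_length_ne_zero D h])
  compat_act := by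
    intro l n h h' σ hl
    by_cases hl0 : l.length = 0
    · exact GData_hom_ext D (by rw [List.length_map, permuteList_length]; omega) _ _
    · have hσl : (permuteList l h σ).length ≠ 0 := by rw [permuteList_length]; omega
      have hl0' : (l.map id).length ≠ 0 := by simpa using hl0
      rw [dif_neg hl0, dif_neg hσl, GData_act D h' σ hl0',
        VCycDataNU.act_congr D.toVCycDataNU (List.map_id l).symm h h' σ]
      simp
  compat_ident := by
    intro cc hl
    rw [dif_neg (by simp), GData_ident]
    simp
  compat_comp := by
    intro c d i j hi hj hcol hi' hj' hcol' hl
    by_cases hres : (profComp c d i j).length = 0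
    · exact GData_hom_ext D (by rw [List.length_map]; exact hres) _ _
    · have hc : c.length ≠ 0 := by omega
      have hd : d.length ≠ 0 := by omega
      have hres' : (profComp (c.map id) (d.map id) i j).length ≠ 0 := by
        rwa [hl, List.length_map]
      rw [dif_neg hc, dif_neg hd, dif_neg hres, GData_comp D i j hi' hj' hcol' hres',
        VCycDataNU.comp_congr D.toVCycDataNU (List.map_id c).symm (List.map_id d).symm i j hi hj
          hcol hi' hj' hcol']
      simp only [Category.assoc, eqToHom_trans, eqToHom_trans_assoc, eqToHom_refl,
        Category.id_comp, eqToHom_tensorHom_eqToHom]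

lemma map_toGData_cf (D : VCycData C V) (l : List C) : l.map (toGData D).cf = l :=
  List.map_id l

lemma toGData_f (D : VCycData C V) {l : List C} (h : l.length ≠ 0) :
    (toGData D).f l = eqToHom (show D.P l = (GData D).P (l.map (toGData D).cf) by
      rw [map_toGData_cf, GData_P_of_length_ne_zero D h]) :=
  dif_neg h

variable {C'' : Type u}

-- Reducible, so that `simp` identifies `(liftGData D Q hQ k).cf` with `k.cf` in object indices.
noncomputable abbrev liftGData (D : VCycData C V) (Q : VCycData C'' V)
    (hQ : IsTerminal (Q.P ([] : List C''))) (k : VCycHom D Q) : VCycHom (GData D) Q where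
  cf := k.cf
  cf_dag := k.cf_dag
  f l :=
    if h : l.length = 0 then
      hQ.from _ ≫ eqToHom (congrArg Q.P (map_eq_nil_of_length_eq_zero k.cf h).symm)
    else eqToHom (GData_P_of_length_ne_zero D h) ≫ k.f l
  compat_act := by
    intro l n h h' σ hl
    by_cases hl0 : l.length = 0
    · exact hom_ext_of_isTerminal_P_nil hQ k.cf (by rw [permuteList_length]; omega) _ _
    · have hσl : (permuteList l h σ).length ≠ 0 := by rw [permuteList_length]; omega
      rw [dif_neg hl0, dif_neg hσl, GData_act D h σ hl0]
      have E := congrArg (eqToHom (GData_P_of_length_ne_zero D hl0) ≫ ·)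
        (k.compat_act l n h h' σ hl)
      simp only [Category.assoc, eqToHom_trans_assoc, eqToHom_refl, Category.id_comp] at E ⊢
      exact E
  compat_ident := by
    intro cc hl
    rw [dif_neg (by simp), ← Category.assoc, GData_ident_comp_eqToHom]
    exact k.compat_ident cc hl
  compat_comp := by
    intro c d i j hi hj hcol hi' hj' hcol' hl
    by_cases hres : (profComp c d i j).length = 0
    · exact hom_ext_of_isTerminal_P_nil hQ k.cf hres _ _
    · have hc : c.length ≠ 0 := by omega
      have hd : d.length ≠ 0 := by omega
      rw [dif_neg hc, dif_neg hd, dif_neg hres, GData_comp D i j hi hj hcol hres]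
      have E := congrArg
        ((eqToHom (GData_P_of_length_ne_zero D hc) ⊗ₘ
          eqToHom (GData_P_of_length_ne_zero D hd)) ≫ ·)
        (k.compat_comp i j hi hj hcol hi' hj' hcol' hl)
      simp only [Category.assoc, eqToHom_trans_assoc, eqToHom_refl, Category.id_comp,
        ← tensorHom_comp_tensorHom] at E ⊢
      exact E

lemma liftGData_f (D : VCycData C V) (Q : VCycData C'' V)
    (hQ : IsTerminal (Q.P ([] : List C''))) (k : VCycHom D Q) {l : List C} (h : l.length ≠ 0) :
    (liftGData D Q hQ k).f l = eqToHom (GData_P_of_length_ne_zero D h) ≫ k.f l :=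
  dif_neg h

lemma compEq_liftGData (D : VCycData C V) (Q : VCycData C'' V)
    (hQ : IsTerminal (Q.P ([] : List C''))) (k : VCycHom D Q) :
    CompEq (liftGData D Q hQ k) (toGData D) k := by
  refine ⟨fun _ => rfl, fun l hl => ?_⟩
  by_cases hl0 : l.length = 0
  · exact hom_ext_of_isTerminal_P_nil hQ k.cf hl0 _ _
  · have hl0' : (l.map (toGData D).cf).length ≠ 0 := by rwa [map_toGData_cf]
    rw [toGData_f D hl0, liftGData_f D Q hQ k hl0',
      VCycHom.f_congr k (map_toGData_cf D l).symm]
    simp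

lemma eq_liftGData_of_compEq (D : VCycData C V) (Q : VCycData C'' V)
    (hQ : IsTerminal (Q.P ([] : List C''))) (k : VCycHom D Q) (g : VCycHom (GData D) Q)
    (hg : CompEq g (toGData D) k) : g = liftGData D Q hQ k := by
  have hcf : g.cf = k.cf := funext hg.1
  refine VCycHom.ext g (liftGData D Q hQ k) hcf fun l => ?_
  by_cases hl0 : l.length = 0
  · exact hom_ext_of_isTerminal_P_nil hQ k.cf hl0 _ _
  · have hk := hg.2 l (by rw [map_toGData_cf, hcf])
    rw [toGData_f D hl0, VCycHom.f_congr g (map_toGData_cf D l).symm] at hk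
    simp only [eqToHom_trans_assoc, Category.assoc, eqToHom_trans] at hk
    rw [liftGData_f D Q hQ k hl0, ← hk]
    simp

end Reflection

theorem positive_reflective_general {C : Type u} {V : Type v} [Category.{w} V]
    [MonoidalCategory V] [SymmetricCategory V] [Limits.HasTerminal V]
    (D : VCycData C V) (hD : IsVCyc D) :
    IsVCyc (GData D) ∧ IsPositive (GData D) ∧
    ∃ η : VCycHom D (GData D), η.cf = id ∧
      ∀ (C'' : Type u) (Q : VCycData C'' V), IsVCyc Q → IsPositive Q →
        ∀ k : VCycHom D Q, ∃! g : VCycHom (GData D) Q, CompEq g η k := by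
  refine ⟨isVCyc_GData hD, isPositive_GData D, toGData D, rfl, ?_⟩
  rintro C'' Q - ⟨hQ⟩ k
  exact ⟨liftGData D Q hQ k, compEq_liftGData D Q hQ k, eq_liftGData_of_compEq D Q hQ k⟩

/-- the full subcategory of positive cyclic operads is reflective in the
category of cyclic operads: for every cyclic operad `P`, the positive cyclic operad `GP`
(same colors, `GP(c₀,…,c_n) = P(c₀,…,c_n)` for `n ≥ 0`, `GP() = *`) receives a unit map
`η : P → GP` which is the identity on colors, and composition with `η` induces a
bijection between morphisms `GP → Q` and morphisms `P → Q` for every positive cyclic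
operad `Q`; i.e. `G` is left adjoint to the inclusion of positive cyclic operads. -/
theorem positive_reflective {C : Type u} {V : Type v} [Category.{w} V]
    [MonoidalCategory V] [SymmetricCategory V] [MonoidalClosed V] [Limits.HasTerminal V]
    (D : VCycData C V) (hD : IsVCyc D) :
    IsVCyc (GData D) ∧ IsPositive (GData D) ∧
    ∃ η : VCycHom D (GData D), η.cf = id ∧
      ∀ (C'' : Type u) (Q : VCycData C'' V), IsVCyc Q → IsPositive Q →
        ∀ k : VCycHom D Q, ∃! g : VCycHom (GData D) Q, CompEq g η k :=
  positive_reflective_general D hD
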